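/- arXiv:0904.2448 — 4 statements merged into one kernel-verified Lean document; each statement's English description precedes it below -/
import Mathlib

section
/- If an evolutionary network contains a hybrid node h and two non-trivial paths v1⇝h and v2⇝h that share only their end h, then either v1 and v2 are both intermediate nodes of a single reticulation cycle for h, or one of v1, v2 is an intermediate node of a reticulation cycle for h whose split node is a descendant of the other node. -/
/-- An evolutionary network: a rooted directed acyclic graph. -/
structure EvoNet (V : Type*) where
  arc : V → V → Prop
  root : V
  acyclic : ∀ v : V, ¬ Relation.TransGen arc v v
  rooted : ∀ v : V, Relation.ReflTransGen arc root v

namespace EvoNet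

variable {V : Type*}

/-- A hybrid node: in-degree at least 2. -/
def IsHybrid (N : EvoNet V) (v : V) : Prop :=
  ∃ u w : V, u ≠ w ∧ N.arc u v ∧ N.arc w v

/-- A tree node: in-degree at most 1. -/
def IsTreeNode (N : EvoNet V) (v : V) : Prop := ¬ N.IsHybrid v

/-- A (directed) path, given as its nonempty list of nodes. -/
def IsPath (N : EvoNet V) (p : List V) : Prop := p ≠ [] ∧ p.Chain' N.arc

/-- The intermediate (non-endpoint) nodes of a path. -/
def interm (p : List V) : Set V := {x | x ∈ (p.drop 1).dropLast}

/-- A reticulation cycle for the hybrid node `hend`: a pair of internally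
disjoint nontrivial paths with the same origin (the split node), both ending
in `hend`. -/
structure RetCycle (N : EvoNet V) where
  hend : V
  p : List V
  q : List V
  isPath_p : N.IsPath p
  isPath_q : N.IsPath q
  len_p : 2 ≤ p.length
  len_q : 2 ≤ q.length
  same_origin : p.head? = q.head?
  last_p : p.getLast? = some hend
  last_q : q.getLast? = some hend
  hybrid : N.IsHybrid hend
  intDisjoint : ∀ x : V, x ∈ interm p → x ∉ interm q
  ne : p ≠ q

/-- The nodes of a reticulation cycle. -/
def RetCycle.nodes {N : EvoNet V} (c : RetCycle N) : Set V :=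
  {x | x ∈ c.p ∨ x ∈ c.q}

/-- The arcs of a reticulation cycle. -/
def RetCycle.arcs {N : EvoNet V} (c : RetCycle N) : Set (V × V) :=
  {e | e ∈ c.p.zip c.p.tail ∨ e ∈ c.q.zip c.q.tail}

/-- The intermediate nodes of a reticulation cycle. -/
def RetCycle.intermNodes {N : EvoNet V} (c : RetCycle N) : Set V :=
  interm c.p ∪ interm c.q

/-- `s` is the split node of the reticulation cycle `c`. -/
def RetCycle.SplitIs {N : EvoNet V} (c : RetCycle N) (s : V) : Prop :=
  c.p.head? = some s

/-- Two reticulation cycles are the same (as unordered pairs of merge paths). -/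
def RetCycle.Equiv {N : EvoNet V} (c₁ c₂ : RetCycle N) : Prop :=
  (c₁.p = c₂.p ∧ c₁.q = c₂.q) ∨ (c₁.p = c₂.q ∧ c₁.q = c₂.p)

/-- 1-nested: no node is intermediate in reticulation cycles for two
different hybrid nodes. -/
def OneNested (N : EvoNet V) : Prop :=
  ∀ c₁ c₂ : RetCycle N, c₁.hend ≠ c₂.hend →
    ∀ x : V, x ∈ c₁.intermNodes → x ∉ c₂.intermNodes

/-- Galled tree: distinct reticulation cycles have disjoint node sets. -/
def Galled (N : EvoNet V) : Prop :=
  ∀ c₁ c₂ : RetCycle N, ¬ c₁.Equiv c₂ → Disjoint c₁.nodes c₂.nodes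

/-- Weakly galled tree: distinct reticulation cycles have disjoint arc sets. -/
def WeaklyGalled (N : EvoNet V) : Prop :=
  ∀ c₁ c₂ : RetCycle N, ¬ c₁.Equiv c₂ → Disjoint c₁.arcs c₂.arcs

/-- 2-hybrid: every hybrid node has in-degree exactly 2. -/
def TwoHybrid (N : EvoNet V) : Prop :=
  ∀ v : V, N.IsHybrid v →
    ∃ u w : V, u ≠ w ∧ N.arc u v ∧ N.arc w v ∧ ∀ z : V, N.arc z v → z = u ∨ z = w

/-- Hybrid-1: every hybrid node has out-degree exactly 1. -/
def HybridOne (N : EvoNet V) : Prop :=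
  ∀ v : V, N.IsHybrid v → ∃! w : V, N.arc v w

/-- Semibinary: hybrid nodes have in-degree 2 and out-degree 1. -/
def Semibinary (N : EvoNet V) : Prop := N.TwoHybrid ∧ N.HybridOne

/-- Node of out-degree exactly 2. -/
def OutDegTwo (N : EvoNet V) (v : V) : Prop :=
  ∃ u w : V, u ≠ w ∧ N.arc v u ∧ N.arc v w ∧ ∀ z : V, N.arc v z → z = u ∨ z = w

/-- An internal (non-leaf) node. -/
def IsInternal (N : EvoNet V) (v : V) : Prop := ∃ w : V, N.arc v w

/-- Binary (fully resolved): semibinary and internal tree nodes have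
out-degree 2. -/
def Binary (N : EvoNet V) : Prop :=
  N.Semibinary ∧ ∀ v : V, N.IsTreeNode v → N.IsInternal v → N.OutDegTwo v

/-- Undirected adjacency induced by a set of arcs. -/
def uadj (A : Set (V × V)) (x y : V) : Prop := (x, y) ∈ A ∨ (y, x) ∈ A

/-- The vertices of a subgraph given by a set of arcs. -/
def everts (A : Set (V × V)) : Set V := {x | ∃ y : V, (x, y) ∈ A ∨ (y, x) ∈ A}

/-- Connectedness of the underlying undirected graph of a set of arcs. -/
def EConnected (A : Set (V × V)) : Prop :=
  ∀ x y : V, x ∈ everts A → y ∈ everts A → Relation.ReflTransGen (uadj A) x y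

/-- Remove a node and all arcs incident to it. -/
def avoid (A : Set (V × V)) (v : V) : Set (V × V) :=
  {e ∈ A | e.1 ≠ v ∧ e.2 ≠ v}

/-- A biconnected subgraph of a network: a set of arcs of the network whose
underlying undirected graph is connected and remains connected after the
removal of any single node (with all arcs incident to it). -/
def Biconnected (N : EvoNet V) (A : Set (V × V)) : Prop :=
  (∀ e ∈ A, N.arc e.1 e.2) ∧ EConnected A ∧ ∀ v : V, EConnected (avoid A v)

/-- Level-1: no biconnected subgraph contains more than one hybrid node. -/
def LevelOne (N : EvoNet V) : Prop :=
  ∀ A : Set (V × V), N.Biconnected A →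
    ∀ h₁ h₂ : V, N.IsHybrid h₁ → N.IsHybrid h₂ →
      h₁ ∈ everts A → h₂ ∈ everts A → h₁ = h₂

/-- `v` is a descendant of `u`. -/
def Desc (N : EvoNet V) (u v : V) : Prop := Relation.ReflTransGen N.arc u v

/-- `v` is a proper descendant of `u`. -/
def ProperDesc (N : EvoNet V) (u v : V) : Prop := Relation.TransGen N.arc u v

/-- `w` is a minimal common ancestor of `u` and `v`: a common ancestor that is
a proper ancestor of no other common ancestor of them. -/
def IsMCA (N : EvoNet V) (w u v : V) : Prop :=
  N.Desc w u ∧ N.Desc w v ∧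
    ∀ z : V, N.Desc z u → N.Desc z v → ¬ N.ProperDesc w z

end EvoNet

/-!
Extend both paths backwards to the root, obtaining root paths `P` through `v₁` and `Q` through
`v₂`, both ending in `h`. The last node `s ≠ h` of `P` that also lies on `Q` is a split node: the
part of `P` after `s` meets `Q` only in `h`, so together with the part of `Q` after `s` it forms a
reticulation cycle for `h`. According as `s` lies before or on `p₁` (and before or on `p₂`),
`v₁` is intermediate in that cycle or an ancestor of `s`; `s` cannot lie on both `p₁` and `p₂`.
-/

namespace List

variable {α : Type*}

theorem exists_eq_append_cons_forall_not_of_exists {q : α → Prop} :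
    ∀ {l : List α}, (∃ x ∈ l, q x) → ∃ A s B, l = A ++ s :: B ∧ q s ∧ ∀ x ∈ B, ¬ q x
  | [], ⟨_, hx, _⟩ => absurd hx not_mem_nil
  | a :: l, ⟨x, hx, hqx⟩ => by
    by_cases hl : ∃ y ∈ l, q y
    · obtain ⟨A, s, B, rfl, hs, hB⟩ := exists_eq_append_cons_forall_not_of_exists hl
      exact ⟨a :: A, s, B, rfl, hs, hB⟩
    · refine ⟨[], a, l, rfl, ?_, fun y hy hqy => hl ⟨y, hy, hqy⟩⟩
      rcases mem_cons.1 hx with rfl | hx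
      · exact hqx
      · exact absurd ⟨x, hx, hqx⟩ hl

theorem Nodup.notMem_dropLast_of_getLast? {l : List α} {a : α} (hl : l.Nodup)
    (ha : l.getLast? = some a) : a ∉ l.dropLast := by
  rw [← dropLast_append_getLast? a ha, nodup_append] at hl
  exact fun h => hl.2.2 a h a (mem_singleton_self a) rfl

theorem getLast?_of_append_eq_append_cons {m l A B : List α} {a s b : α}
    (h : m ++ a :: l = A ++ s :: B) (hl : (a :: l).getLast? = some b) (hsb : s ≠ b) :
    B.getLast? = some b := by
  rw [← getLast?_append_of_ne_nil m (cons_ne_nil a l), h,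
    getLast?_append_of_ne_nil A (cons_ne_nil s B)] at hl
  cases B with
  | nil => simp_all
  | cons c B => simpa using hl

variable {r : α → α → Prop}

theorem IsChain.transGen_of_mem {a b : α} {l : List α} (hl : (a :: l).IsChain r)
    (hb : b ∈ l) : Relation.TransGen r a b :=
  (pairwise_cons.1 (hl.imp fun _ _ => Relation.TransGen.single).pairwise).1 b hb

theorem IsChain.reflTransGen_of_mem {a b : α} {l : List α} (hl : (a :: l).IsChain r)
    (hb : b ∈ a :: l) : Relation.ReflTransGen r a b := by
  rcases mem_cons.1 hb with rfl | hb
  · exact .refl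
  · exact (hl.transGen_of_mem hb).to_reflTransGen

theorem exists_isChain_append_of_reflTransGen {a b : α} {l : List α}
    (hab : Relation.ReflTransGen r a b) (hl : (b :: l).IsChain r) :
    ∃ m, (m ++ b :: l).IsChain r ∧ (m ++ b :: l).head? = some a := by
  induction hab using Relation.ReflTransGen.head_induction_on with
  | refl => exact ⟨[], hl, rfl⟩
  | @head a c hac _ ih =>
    obtain ⟨m, hm, hmh⟩ := ih
    refine ⟨a :: m, isChain_cons.2 ⟨fun y (hy : y ∈ (m ++ b :: l).head?) => ?_, hm⟩, rfl⟩
    rw [hmh, Option.mem_some_iff] at hy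
    exact hy ▸ hac

theorem mem_or_reflTransGen_of_append_eq {m l A B : List α} {a s : α}
    (hl : (a :: l).IsChain r) (h : m ++ a :: l = A ++ s :: B) :
    a ∈ B ∨ s ∈ a :: l ∧ Relation.ReflTransGen r a s := by
  rcases append_eq_append_iff.1 h with ⟨C, -, hC⟩ | ⟨C, -, hC⟩
  · have hs : s ∈ a :: l := by simp [hC]
    exact .inr ⟨hs, hl.reflTransGen_of_mem hs⟩
  · cases C with
    | nil =>
      obtain ⟨rfl, -⟩ := cons.inj hC
      exact .inr ⟨mem_cons_self, .refl⟩
    | cons c C =>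
      obtain ⟨-, rfl⟩ := cons.inj hC
      exact .inl (mem_append_right _ mem_cons_self)

end List

namespace EvoNet

variable {V : Type*} (N : EvoNet V)

theorem nodup_of_isChain {p : List V} (hp : p.IsChain N.arc) : p.Nodup := by
  refine (hp.imp fun _ _ => Relation.TransGen.single).pairwise.imp fun {a _} hab => ?_
  rintro rfl
  exact N.acyclic a hab

theorem IsHybrid.root_ne {N : EvoNet V} {h : V} (hh : N.IsHybrid h) : N.root ≠ h := by
  obtain ⟨u, -, -, hu, -⟩ := hh
  rintro rfl
  exact N.acyclic N.root (.tail' (N.rooted u) hu)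

theorem head_ne_of_getLast? {p : List V} {v h : V} (hp : (v :: p).IsChain N.arc)
    (hl : 2 ≤ (v :: p).length) (he : (v :: p).getLast? = some h) : v ≠ h := by
  cases p with
  | nil => simp at hl
  | cons c p =>
    rintro rfl
    exact N.acyclic v (hp.transGen_of_mem (List.mem_of_getLast? (by simpa using he)))

theorem exists_retCycle_of_split {s h : V} {B D : List V} (hB : (s :: B).IsChain N.arc)
    (hD : (s :: D).IsChain N.arc) (hBh : B.getLast? = some h) (hDh : D.getLast? = some h)
    (hh : N.IsHybrid h) (hBD : ∀ x ∈ B, x ∈ D → x = h) (hne : B ≠ D) :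
    ∃ c : RetCycle N, c.hend = h ∧ c.SplitIs s ∧ ∀ x ∈ B ++ D, x ≠ h → x ∈ c.intermNodes := by
  have hBne : B ≠ [] := by rintro rfl; simp at hBh
  have hDne : D ≠ [] := by rintro rfl; simp at hDh
  have hdisj : ∀ x ∈ interm (s :: B), x ∉ interm (s :: D) := fun x hxB hxD =>
    (N.nodup_of_isChain hB).of_cons.notMem_dropLast_of_getLast? hBh <|
      hBD x (List.mem_of_mem_dropLast hxB) (List.mem_of_mem_dropLast hxD) ▸ hxB
  refine ⟨⟨h, s :: B, s :: D, ⟨List.cons_ne_nil _ _, hB⟩, ⟨List.cons_ne_nil _ _, hD⟩,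
    ?_, ?_, rfl, ?_, ?_, hh, hdisj, by simpa using hne⟩, rfl, rfl, ?_⟩
  · simpa [Nat.succ_le_iff, List.length_pos_iff] using hBne
  · simpa [Nat.succ_le_iff, List.length_pos_iff] using hDne
  · rw [List.getLast?_cons, hBh]; rfl
  · rw [List.getLast?_cons, hDh]; rfl
  · rintro x hx hxh
    show x ∈ B.dropLast ∨ x ∈ D.dropLast
    refine (List.mem_append.1 hx).imp (fun hx => ?_) fun hx => ?_
    · exact List.mem_dropLast_of_mem_of_ne_getLast? hx (by rwa [hBh, ne_eq, Option.some_inj])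
    · exact List.mem_dropLast_of_mem_of_ne_getLast? hx (by rwa [hDh, ne_eq, Option.some_inj])

end EvoNet

theorem glisters_lemma2 {V : Type*} (N : EvoNet V) (h v₁ v₂ : V)
    (hh : N.IsHybrid h)
    (p₁ p₂ : List V)
    (hp₁ : N.IsPath p₁) (hp₂ : N.IsPath p₂)
    (hl₁ : 2 ≤ p₁.length) (hl₂ : 2 ≤ p₂.length)
    (ho₁ : p₁.head? = some v₁) (ho₂ : p₂.head? = some v₂)
    (he₁ : p₁.getLast? = some h) (he₂ : p₂.getLast? = some h)
    (hshare : ∀ x : V, x ∈ p₁ → x ∈ p₂ → x = h) :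
    (∃ c : EvoNet.RetCycle N, c.hend = h ∧ v₁ ∈ c.intermNodes ∧ v₂ ∈ c.intermNodes) ∨
    (∃ c : EvoNet.RetCycle N, c.hend = h ∧
      ((v₁ ∈ c.intermNodes ∧ ∃ s : V, c.SplitIs s ∧ N.Desc v₂ s) ∨
       (v₂ ∈ c.intermNodes ∧ ∃ s : V, c.SplitIs s ∧ N.Desc v₁ s))) := by
  obtain ⟨t₁, rfl⟩ := List.head?_eq_some_iff.1 ho₁
  obtain ⟨t₂, rfl⟩ := List.head?_eq_some_iff.1 ho₂
  have hv₁h := N.head_ne_of_getLast? hp₁.2 hl₁ he₁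
  have hv₂h := N.head_ne_of_getLast? hp₂.2 hl₂ he₂
  obtain ⟨l₁, hP, hPr⟩ := List.exists_isChain_append_of_reflTransGen (N.rooted v₁) hp₁.2
  obtain ⟨l₂, hQ, hQr⟩ := List.exists_isChain_append_of_reflTransGen (N.rooted v₂) hp₂.2
  obtain ⟨A, s, B, hPAB, ⟨hsQ, hsh⟩, hBQ⟩ :=
    List.exists_eq_append_cons_forall_not_of_exists (q := fun x => x ∈ l₂ ++ v₂ :: t₂ ∧ x ≠ h)
      ⟨N.root, List.mem_of_mem_head? hPr, List.mem_of_mem_head? hQr, hh.root_ne⟩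
  obtain ⟨C, D, hQCD⟩ := List.append_of_mem hsQ
  have hBD : ∀ x ∈ B, x ∈ D → x = h := fun x hxB hxD =>
    of_not_not fun hxh => hBQ x hxB ⟨hQCD ▸ by simp [hxD], hxh⟩
  have hs₁ := List.mem_or_reflTransGen_of_append_eq hp₁.2 hPAB
  have hs₂ := List.mem_or_reflTransGen_of_append_eq hp₂.2 hQCD
  have hne : B ≠ D := by
    rintro rfl
    rcases hs₁ with hv₁ | ⟨hs₁, -⟩
    · exact hv₁h (hBD v₁ hv₁ hv₁)
    rcases hs₂ with hv₂ | ⟨hs₂, -⟩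
    · exact hv₂h (hBD v₂ hv₂ hv₂)
    exact hsh (hshare s hs₁ hs₂)
  obtain ⟨c, rfl, hsplit, hint⟩ := N.exists_retCycle_of_split (hPAB ▸ hP).right_of_append
    (hQCD ▸ hQ).right_of_append (List.getLast?_of_append_eq_append_cons hPAB he₁ hsh)
    (List.getLast?_of_append_eq_append_cons hQCD he₂ hsh) hh hBD hne
  rcases hs₁ with hv₁ | ⟨hs₁, hd₁⟩ <;> rcases hs₂ with hv₂ | ⟨hs₂, hd₂⟩
  · exact .inl ⟨c, rfl, hint v₁ (by simp [hv₁]) hv₁h, hint v₂ (by simp [hv₂]) hv₂h⟩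
  · exact .inr ⟨c, rfl, .inl ⟨hint v₁ (by simp [hv₁]) hv₁h, s, hsplit, hd₂⟩⟩
  · exact .inr ⟨c, rfl, .inr ⟨hint v₂ (by simp [hv₂]) hv₂h, s, hsplit, hd₁⟩⟩
  · exact absurd (hshare s hs₁ hs₂) hsh
end

section
/- Every 1-nested network without out-degree 1 tree nodes is tree-child: every internal node has at least one child of tree type (in-degree at most 1). -/
/-!
Suppose an internal node `v` has only hybrid children. A node `z` is intermediate in a
reticulation cycle for `h` as soon as `z` reaches `h` inside some set `S` of nodes while an
ancestor of `z` reaches `h` avoiding `S`: the two routes split at their last common node.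

If some child `h` of `v` cannot be reached from the root avoiding `v`, then the other parent of
`h` lies below another child `x` of `v`. Neither can `x` be reached avoiding `v`, so likewise
some child `y` of `v` lies above `x`, and `y` is intermediate in cycles for both `x` and `h`,
split at `v`. Otherwise `v` is intermediate in a cycle for each of its children, so by
1-nestedness it has exactly one child `c`. As tree nodes do not have out-degree 1, `v` is a
hybrid node, with parents `t ≠ t'` where `t` is not an ancestor of `t'`; then `t` is
intermediate in cycles for both `v` and `c`.
-/

open Relation

namespace Relation

variable {α : Type*} {r : α → α → Prop} {a b : α}

theorem TransGen.restrict_reachable (h : TransGen r a b) :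
    TransGen (fun x y => r x y ∧ ReflTransGen r a x) a b := by
  induction h with
  | single hab => exact .single ⟨hab, .refl⟩
  | tail hac hcd ih => exact ih.tail ⟨hcd, hac.to_reflTransGen⟩

theorem ReflTransGen.restrict_coreachable (h : ReflTransGen r a b) :
    ReflTransGen (fun x y => r x y ∧ ReflTransGen r x b) a b := by
  induction h using ReflTransGen.head_induction_on with
  | refl => exact .refl
  | head hac hcb ih => exact ih.head ⟨hac, hcb.head hac⟩

theorem ReflTransGen.avoid_or (h : ReflTransGen r a b) (t : α) :
    ReflTransGen (fun x y => r x y ∧ x ≠ t) a b ∨ ReflTransGen r t b := by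
  induction h with
  | refl => exact .inl .refl
  | @tail c d _ hcd ih =>
    rcases ih with hac | htc
    · by_cases hct : c = t
      · exact .inr (hct ▸ .single hcd)
      · exact .inl (hac.tail ⟨hcd, hct⟩)
    · exact .inr (htc.tail hcd)

end Relation

theorem List.exists_isChain_of_transGen {α : Type*} {r : α → α → Prop} {p : α → Prop} {a b : α}
    (h : TransGen (fun x y => r x y ∧ p x) a b) :
    ∃ l, (a :: l ++ [b]).IsChain r ∧ ∀ x ∈ a :: l, p x := by
  induction h using TransGen.head_induction_on with
  | single hab => exact ⟨[], by simpa using hab.1, by simpa using hab.2⟩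
  | head hac _ ih =>
    obtain ⟨l, hl, hp⟩ := ih
    exact ⟨_ :: l, hl.cons_cons hac.1, List.forall_mem_cons.2 ⟨hac.2, hp⟩⟩

theorem List.exists_eq_append_cons_last {α : Type*} {p : α → Prop} :
    ∀ {l : List α}, (∃ x ∈ l, p x) → ∃ l₁ s l₂, l = l₁ ++ s :: l₂ ∧ p s ∧ ∀ x ∈ l₂, ¬ p x
  | [], ⟨_, hx, _⟩ => absurd hx List.not_mem_nil
  | a :: l, ⟨x, hx, hpx⟩ => by
    by_cases hl : ∃ y ∈ l, p y
    · obtain ⟨l₁, s, l₂, rfl, hs, hl₂⟩ := List.exists_eq_append_cons_last hl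
      exact ⟨a :: l₁, s, l₂, rfl, hs, hl₂⟩
    · rcases List.mem_cons.1 hx with rfl | hxl
      · exact ⟨[], x, l, rfl, hpx, fun y hy hpy => hl ⟨y, hy, hpy⟩⟩
      · exact absurd ⟨x, hxl, hpx⟩ hl

namespace EvoNet

variable {V : Type*} (N : EvoNet V)

def IsIntermediate (x h : V) : Prop :=
  ∃ c : N.RetCycle, c.hend = h ∧ x ∈ c.intermNodes

variable {N}

theorem OneNested.eq_of_isIntermediate (h1n : N.OneNested) {x h₁ h₂ : V}
    (hx₁ : N.IsIntermediate x h₁) (hx₂ : N.IsIntermediate x h₂) : h₁ = h₂ := by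
  obtain ⟨c₁, rfl, hc₁⟩ := hx₁
  obtain ⟨c₂, rfl, hc₂⟩ := hx₂
  by_contra hne
  exact h1n c₁ c₂ hne x hc₁ hc₂

theorem not_reflTransGen_of_transGen {a b : V} (h : TransGen N.arc a b) :
    ¬ ReflTransGen N.arc b a :=
  fun h' => N.acyclic a (h.trans_left h')

theorem ne_of_transGen {a b : V} (h : TransGen N.arc a b) : a ≠ b := by
  rintro rfl
  exact N.acyclic a h

theorem eq_of_reflTransGen_of_reflTransGen {a b : V} (hab : ReflTransGen N.arc a b)
    (hba : ReflTransGen N.arc b a) : a = b := by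
  rcases reflTransGen_iff_eq_or_transGen.1 hab with h | h
  · exact h.symm
  · exact absurd hba (N.not_reflTransGen_of_transGen h)

theorem IsHybrid.exists_ne_arc {h : V} (hh : N.IsHybrid h) (v : V) : ∃ w, w ≠ v ∧ N.arc w h := by
  obtain ⟨a, b, hab, ha, hb⟩ := hh
  by_cases hav : a = v
  · exact ⟨b, fun hbv => hab (hav.trans hbv.symm), hb⟩
  · exact ⟨a, hav, ha⟩

theorem isIntermediate_of_fork {s h x : V} {P Q : List V}
    (hP : (s :: P ++ [h]).IsChain N.arc) (hQ : (s :: Q ++ [h]).IsChain N.arc)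
    (hPQ : ∀ y ∈ P, y ∉ Q) (hx : x ∈ P) (hh : N.IsHybrid h) : N.IsIntermediate x h := by
  have hinterm : ∀ L : List V, interm (s :: L ++ [h]) = {y | y ∈ L} := by simp [interm]
  refine ⟨{ hend := h, p := s :: P ++ [h], q := s :: Q ++ [h]
            isPath_p := ⟨by simp, hP⟩, isPath_q := ⟨by simp, hQ⟩
            len_p := by simp, len_q := by simp, same_origin := rfl
            last_p := List.getLast?_concat, last_q := List.getLast?_concat, hybrid := hh
            intDisjoint := by rw [hinterm, hinterm]; exact hPQ
            ne := fun hpq => hPQ x hx (by simp_all) }, rfl, Or.inl ?_⟩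
  show x ∈ interm (s :: P ++ [h])
  rw [hinterm]
  exact hx

theorem isIntermediate_of_reach {S : Set V} {a z h : V} (haz : ReflTransGen N.arc a z)
    (hzh : TransGen (fun x y => N.arc x y ∧ x ∈ S) z h)
    (hah : ReflTransGen (fun x y => N.arc x y ∧ x ∉ S) a h) (hh : N.IsHybrid h) :
    N.IsIntermediate z h := by
  obtain ⟨K, hK, hKS⟩ := List.exists_isChain_of_transGen hzh
  have hzh' : TransGen N.arc z h := TransGen.mono (fun _ _ hxy => hxy.1) _ _ hzh
  have hah' : TransGen (fun x y => N.arc x y ∧ x ∉ S) a h := by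
    refine (reflTransGen_iff_eq_or_transGen.1 hah).resolve_left ?_
    rintro rfl
    exact N.not_reflTransGen_of_transGen hzh' haz
  obtain ⟨W, hW, hWS⟩ := List.exists_isChain_of_transGen hah'
  have haz' : TransGen (fun x y => N.arc x y ∧ True) a z := by
    refine TransGen.mono (fun _ _ hxy => ⟨hxy, trivial⟩) _ _
      ((reflTransGen_iff_eq_or_transGen.1 haz).resolve_left ?_)
    rintro rfl
    exact hWS z List.mem_cons_self (hKS z List.mem_cons_self)
  obtain ⟨R, hR, -⟩ := List.exists_isChain_of_transGen haz'
  -- the cycle splits at the last node of the route avoiding `S` that lies on the route to `z`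
  obtain ⟨W₁, s, W₂, hWeq, hsR, hW₂⟩ :=
    List.exists_eq_append_cons_last (l := a :: W) (p := (· ∈ a :: R))
      ⟨a, List.mem_cons_self, List.mem_cons_self⟩
  obtain ⟨R₁, R₂, hReq⟩ := List.append_of_mem hsR
  have hRK : (a :: R ++ z :: K ++ [h]).IsChain N.arc := by
    simpa using hR.append_overlap (l₃ := K ++ [h]) (by simpa using hK) (List.cons_ne_nil _ _)
  refine N.isIntermediate_of_fork (s := s) (P := R₂ ++ z :: K) (Q := W₂) ?_ ?_ ?_ (by simp) hh
  · exact hRK.suffix ⟨R₁, by simp [hReq]⟩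
  · exact hW.suffix ⟨W₁, by simp [hWeq]⟩
  · intro y hy hyW
    rcases List.mem_append.1 hy with hyR | hyK
    · exact hW₂ y hyW (by simp [hReq, hyR])
    · exact hWS y (by simp [hWeq, hyW]) (hKS y hyK)

theorem rooted_avoiding_descendants {t w : V} (htw : ¬ ReflTransGen N.arc t w) :
    ReflTransGen (fun x y => N.arc x y ∧ ¬ ReflTransGen N.arc t x) N.root w :=
  ReflTransGen.mono (fun _ _ hxy => ⟨hxy.1, fun htx => htw (htx.trans hxy.2)⟩) _ _
    (N.rooted w).restrict_coreachable

theorem isIntermediate_of_not_reflTransGen {z w h : V} (hzh : TransGen N.arc z h) (hwh : N.arc w h)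
    (hzw : ¬ ReflTransGen N.arc z w) (hh : N.IsHybrid h) : N.IsIntermediate z h :=
  N.isIntermediate_of_reach (S := {x | ReflTransGen N.arc z x}) (N.rooted z)
    hzh.restrict_reachable ((N.rooted_avoiding_descendants hzw).tail ⟨hwh, hzw⟩) hh

theorem isIntermediate_of_reach_avoiding {v h : V} (hvh : N.arc v h)
    (hreach : ReflTransGen (fun x y => N.arc x y ∧ x ≠ v) N.root h) (hh : N.IsHybrid h) :
    N.IsIntermediate v h :=
  N.isIntermediate_of_reach (S := {v}) (N.rooted v) (.single ⟨hvh, rfl⟩) hreach hh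

theorem reach_avoiding_trans {v x h : V}
    (hx : ReflTransGen (fun x y => N.arc x y ∧ x ≠ v) N.root x) (hvx : N.arc v x)
    (hxh : TransGen N.arc x h) : ReflTransGen (fun x y => N.arc x y ∧ x ≠ v) N.root h := by
  refine hx.trans (TransGen.to_reflTransGen ?_)
  refine TransGen.mono (fun y _ hy => ⟨hy.1, ?_⟩) _ _ hxh.restrict_reachable
  rintro rfl
  exact N.not_reflTransGen_of_transGen (.single hvx) hy.2

theorem exists_arc_transGen_of_not_reach_avoiding {v h : V} (hh : N.IsHybrid h)
    (hng : ¬ ReflTransGen (fun x y => N.arc x y ∧ x ≠ v) N.root h) :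
    ∃ x, N.arc v x ∧ TransGen N.arc x h := by
  obtain ⟨w, hwv, hwh⟩ := hh.exists_ne_arc v
  rcases (N.rooted w).avoid_or v with hw | hvw
  · exact absurd (hw.tail ⟨hwh, hwv⟩) hng
  · obtain ⟨x, hvx, hxw⟩ :=
      TransGen.head'_iff.1 ((reflTransGen_iff_eq_or_transGen.1 hvw).resolve_left hwv)
    exact ⟨x, hvx, TransGen.tail' hxw hwh⟩

theorem reach_avoiding_of_forall_arc_isHybrid (h1n : N.OneNested) {v h : V}
    (hchild : ∀ w, N.arc v w → N.IsHybrid w) (hvh : N.arc v h) :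
    ReflTransGen (fun x y => N.arc x y ∧ x ≠ v) N.root h := by
  by_contra hng
  obtain ⟨x, hvx, hxh⟩ := N.exists_arc_transGen_of_not_reach_avoiding (hchild h hvh) hng
  obtain ⟨y, hvy, hyx⟩ := N.exists_arc_transGen_of_not_reach_avoiding (hchild x hvx)
    fun hx => hng (N.reach_avoiding_trans hx hvx hxh)
  have hyv : ¬ ReflTransGen N.arc y v := N.not_reflTransGen_of_transGen (.single hvy)
  exact N.ne_of_transGen hxh <| h1n.eq_of_isIntermediate
    (N.isIntermediate_of_not_reflTransGen hyx hvx hyv (hchild x hvx))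
    (N.isIntermediate_of_not_reflTransGen (hyx.trans hxh) hvh hyv (hchild h hvh))

theorem isIntermediate_grandparent_of_reach_avoiding {t t' v c : V} (htv : N.arc t v)
    (ht'v : N.arc t' v) (htt' : ¬ ReflTransGen N.arc t t') (hvc : N.arc v c)
    (hc : ReflTransGen (fun x y => N.arc x y ∧ x ≠ v) N.root c) (hch : N.IsHybrid c) :
    N.IsIntermediate t c := by
  rcases hc.avoid_or t with hc' | htc
  · refine N.isIntermediate_of_reach (S := {t, v}) (N.rooted t)
      ((TransGen.single ⟨hvc, by simp⟩).head ⟨htv, by simp⟩) ?_ hch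
    exact ReflTransGen.mono (fun x y hxy => ⟨hxy.1.1, by simp [hxy.1.2, hxy.2]⟩) _ _ hc'
  · have htc' : TransGen (fun x y => N.arc x y ∧ x ≠ v) t c :=
      (reflTransGen_iff_eq_or_transGen.1 htc).resolve_left
        (N.ne_of_transGen ((TransGen.single htv).tail hvc)).symm
    refine N.isIntermediate_of_reach (S := {x | ReflTransGen N.arc t x ∧ x ≠ v}) (N.rooted t)
      (TransGen.mono (fun _ _ hxy => ⟨hxy.1.1, ReflTransGen.mono (fun _ _ h => h.1) _ _ hxy.2,
        hxy.1.2⟩) _ _ htc'.restrict_reachable) ?_ hch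
    exact ((ReflTransGen.mono (fun _ _ hxy => ⟨hxy.1, fun htx => hxy.2 htx.1⟩) _ _
      (N.rooted_avoiding_descendants htt')).tail
      ⟨ht'v, fun ht' => htt' ht'.1⟩).tail ⟨hvc, fun hv => hv.2 rfl⟩

end EvoNet

theorem oneNested_treeChild {V : Type*} (N : EvoNet V)
    (h1n : N.OneNested)
    (hout : ∀ v : V, N.IsTreeNode v → ¬ (∃! w : V, N.arc v w)) :
    ∀ v : V, N.IsInternal v → ∃ w : V, N.arc v w ∧ N.IsTreeNode w := by
  rintro v ⟨c, hvc⟩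
  by_contra! hcon
  have hchild (w : V) (hvw : N.arc v w) : N.IsHybrid w := not_not.1 (hcon w hvw)
  have hreach (h : V) (hvh : N.arc v h) :
      ReflTransGen (fun x y => N.arc x y ∧ x ≠ v) N.root h :=
    N.reach_avoiding_of_forall_arc_isHybrid h1n hchild hvh
  have hinterm (h : V) (hvh : N.arc v h) : N.IsIntermediate v h :=
    N.isIntermediate_of_reach_avoiding hvh (hreach h hvh) (hchild h hvh)
  have hv : N.IsHybrid v := by
    by_contra hv
    exact hout v hv ⟨c, hvc, fun h hvh => h1n.eq_of_isIntermediate (hinterm h hvh) (hinterm c hvc)⟩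
  have hparent (t t' : V) (htv : N.arc t v) (ht'v : N.arc t' v)
      (htt' : ¬ ReflTransGen N.arc t t') : False :=
    N.ne_of_transGen (.single hvc) <| h1n.eq_of_isIntermediate
      (N.isIntermediate_of_not_reflTransGen (.single htv) ht'v htt' hv)
      (N.isIntermediate_grandparent_of_reach_avoiding htv ht'v htt' hvc (hreach c hvc)
        (hchild c hvc))
  obtain ⟨a, b, hab, ha, hb⟩ := hv
  by_cases hab' : ReflTransGen N.arc a b
  · exact hparent b a hb ha fun hba => hab (N.eq_of_reflTransGen_of_reflTransGen hab' hba)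
  · exact hparent a b ha hb hab'
end

section
/- In a level-1 network, the split node of every reticulation cycle is a tree node (has in-degree at most 1). -/
/-!
The two merge paths of a reticulation cycle together form a biconnected subgraph of the
network. Its underlying graph is connected since every node of the cycle reaches the hybrid
end along its path. After deleting a node `v`, every remaining node on a path, which is simple
by acyclicity, is still joined to the split node or to the hybrid end (whichever lies on its side
of `v`); if `v` is neither of these, it is intermediate on at most one of the two internally
disjoint paths, so the other one still joins the split node to the hybrid end. The split node and
the hybrid end are distinct by acyclicity, so if the split node were hybrid this biconnected
subgraph would contain two hybrid nodes, which level-1 forbids.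
-/

open Relation

namespace List

variable {α : Type*} {R : α → α → Prop} {l : List α} {a b x y : α}

theorem isChain_iff_forall_mem_zip_tail :
    ∀ {l : List α}, l.IsChain R ↔ ∀ a b, (a, b) ∈ l.zip l.tail → R a b
  | [] | [_] => by simp
  | a :: b :: l => by
    simp [isChain_cons_cons, isChain_iff_forall_mem_zip_tail (l := b :: l), or_imp, forall_and]

theorem IsChain.nodup_of_acyclic (hR : ∀ a, ¬ TransGen R a a) (hl : l.IsChain R) :
    l.Nodup :=
  (isChain_iff_pairwise.mp (hl.imp fun _ _ => TransGen.single)).imp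
    fun {a _} hab => by rintro rfl; exact hR a hab

theorem IsChain.reflTransGen_of_mem_s14 [Std.Symm R] (hl : l.IsChain R) (hx : x ∈ l) (hy : y ∈ l) :
    ReflTransGen R x y := by
  have hne := ne_nil_of_mem hx
  have key := IsChain.induction (ReflTransGen R (l.head hne)) l hl
    (fun _ _ hxy h => h.tail hxy) fun _ => .refl
  exact (symm (key x hx)).trans (key y hy)

theorem exists_mem_zip_tail_of_mem :
    ∀ {l : List α}, 2 ≤ l.length → x ∈ l →
      ∃ y, (x, y) ∈ l.zip l.tail ∨ (y, x) ∈ l.zip l.tail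
  | a :: b :: t, _, hx => by
    rcases mem_cons.mp hx with rfl | hx
    · exact ⟨b, .inl (by simp)⟩
    cases t with
    | nil => exact ⟨a, .inr (by simp [mem_singleton.mp hx])⟩
    | cons c t =>
      obtain ⟨y, h | h⟩ := exists_mem_zip_tail_of_mem (l := b :: c :: t) (by simp) hx
      exacts [⟨y, .inl (mem_cons_of_mem _ h)⟩, ⟨y, .inr (mem_cons_of_mem _ h)⟩]

theorem Nodup.ne_of_head?_of_getLast? (hl : l.Nodup) (h2 : 2 ≤ l.length)
    (ha : l.head? = some a) (hb : l.getLast? = some b) : a ≠ b := by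
  obtain _ | ⟨a', _ | ⟨b', t⟩⟩ := l
  · simp at h2
  · simp at h2
  obtain rfl : a' = a := by simpa using ha
  rintro rfl
  exact (nodup_cons.mp hl).1 (mem_of_getLast? (by simpa [getLast?_cons_cons] using hb))

end List

namespace EvoNet

variable {V : Type*} {A : Set (V × V)} {l : List V} {a b v x y : V}

instance : Std.Symm (uadj A) := ⟨fun _ _ h => h.symm⟩

theorem econnected_of_forall_reflTransGen (c : V)
    (h : ∀ x ∈ everts A, ReflTransGen (uadj A) x c) : EConnected A :=
  fun x y hx hy => (h x hx).trans (symm (h y hy))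

theorem everts_avoid_subset : everts (avoid A v) ⊆ everts A \ {v} := by
  rintro x ⟨y, ⟨hxy, hx, -⟩ | ⟨hyx, -, hx⟩⟩
  · exact ⟨⟨y, .inl hxy⟩, hx⟩
  · exact ⟨⟨y, .inr hyx⟩, hx⟩

theorem eq_of_reflTransGen_uadj_avoid (h : ReflTransGen (uadj (avoid A v)) x v) : x = v := by
  rcases h.cases_tail with rfl | ⟨_, -, ⟨-, -, hv⟩ | ⟨-, hv, -⟩⟩
  · rfl
  all_goals exact absurd rfl hv

theorem reflTransGen_uadj_of_mem (hl : l.IsChain fun x y => (x, y) ∈ A) (hx : x ∈ l)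
    (hy : y ∈ l) : ReflTransGen (uadj A) x y :=
  (hl.imp (S := uadj A) fun _ _ => Or.inl).reflTransGen_of_mem_s14 hx hy

theorem isChain_mem_avoid (hl : l.IsChain fun x y => (x, y) ∈ A) (hv : v ∉ l) :
    l.IsChain fun x y => (x, y) ∈ avoid A v :=
  hl.imp_of_mem_imp fun _ _ ha hb hab =>
    ⟨hab, ne_of_mem_of_not_mem ha hv, ne_of_mem_of_not_mem hb hv⟩

theorem reflTransGen_uadj_avoid_head_or_getLast (hnd : l.Nodup)
    (hl : l.IsChain fun x y => (x, y) ∈ A) (ha : l.head? = some a) (hb : l.getLast? = some b)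
    (hx : x ∈ l) (hxv : x ≠ v) :
    ReflTransGen (uadj (avoid A v)) x a ∨ ReflTransGen (uadj (avoid A v)) x b := by
  by_cases hvl : v ∈ l
  · obtain ⟨l₁, l₂, rfl⟩ := List.append_of_mem hvl
    have hnd' := List.nodup_append.mp hnd
    have hv₁ : v ∉ l₁ := fun h => hnd'.2.2 v h v List.mem_cons_self rfl
    have hv₂ : v ∉ l₂ := (List.nodup_cons.mp hnd'.2.1).1
    rcases List.mem_append.mp hx with hx₁ | hx₂
    · have ha₁ : a ∈ l₁ := List.mem_of_mem_head? <|
        (List.head?_append_of_ne_nil l₁ (List.ne_nil_of_mem hx₁)).symm.trans ha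
      exact .inl (reflTransGen_uadj_of_mem (isChain_mem_avoid hl.left_of_append hv₁) hx₁ ha₁)
    · have hx₂ : x ∈ l₂ := (List.mem_cons.mp hx₂).resolve_left hxv
      have hb₂ : b ∈ l₂ := List.mem_of_getLast? <| by
        rwa [List.getLast?_append_of_ne_nil _ (List.cons_ne_nil v l₂),
          List.getLast?_cons_of_ne_nil (List.ne_nil_of_mem hx₂)] at hb
      exact .inr <|
        reflTransGen_uadj_of_mem (isChain_mem_avoid hl.right_of_append.tail hv₂) hx₂ hb₂
  · exact .inl (reflTransGen_uadj_of_mem (isChain_mem_avoid hl hvl) hx (List.mem_of_mem_head? ha))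

theorem mem_interm (ha : l.head? = some a) (hb : l.getLast? = some b) (hx : x ∈ l)
    (hxa : x ≠ a) (hxb : x ≠ b) : x ∈ interm l := by
  obtain ⟨a', t, rfl⟩ := List.exists_cons_of_ne_nil (List.ne_nil_of_mem hx)
  obtain rfl : a' = a := by simpa using ha
  have hxt : x ∈ t := (List.mem_cons.mp hx).resolve_left hxa
  have hbt : t.getLast? = some b := by
    rwa [List.getLast?_cons_of_ne_nil (List.ne_nil_of_mem hxt)] at hb
  show x ∈ t.dropLast
  rw [← List.dropLast_append_getLast? b hbt] at hxt
  simpa [hxb] using hxt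

namespace RetCycle

variable {N : EvoNet V} (c : RetCycle N) {s : V}

theorem isChain_p_arcs : c.p.IsChain fun x y => (x, y) ∈ c.arcs :=
  List.isChain_iff_forall_mem_zip_tail.mpr fun _ _ h => Or.inl h

theorem isChain_q_arcs : c.q.IsChain fun x y => (x, y) ∈ c.arcs :=
  List.isChain_iff_forall_mem_zip_tail.mpr fun _ _ h => Or.inr h

theorem arc_of_mem_arcs {e : V × V} (he : e ∈ c.arcs) : N.arc e.1 e.2 := by
  rcases he with h | h
  · exact List.isChain_iff_forall_mem_zip_tail.mp c.isPath_p.2 _ _ h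
  · exact List.isChain_iff_forall_mem_zip_tail.mp c.isPath_q.2 _ _ h

theorem everts_arcs : everts c.arcs = c.nodes := by
  ext x
  constructor
  · rintro ⟨y, (h | h) | (h | h)⟩
    · exact .inl (List.of_mem_zip h).1
    · exact .inr (List.of_mem_zip h).1
    · exact .inl (List.mem_of_mem_tail (List.of_mem_zip h).2)
    · exact .inr (List.mem_of_mem_tail (List.of_mem_zip h).2)
  · rintro (hx | hx)
    · obtain ⟨y, h | h⟩ := List.exists_mem_zip_tail_of_mem c.len_p hx
      exacts [⟨y, .inl (.inl h)⟩, ⟨y, .inr (.inl h)⟩]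
    · obtain ⟨y, h | h⟩ := List.exists_mem_zip_tail_of_mem c.len_q hx
      exacts [⟨y, .inl (.inr h)⟩, ⟨y, .inr (.inr h)⟩]

theorem head?_q (hs : c.SplitIs s) : c.q.head? = some s :=
  c.same_origin ▸ hs

theorem split_ne_hend (hs : c.SplitIs s) : s ≠ c.hend :=
  (c.isPath_p.2.nodup_of_acyclic N.acyclic).ne_of_head?_of_getLast? c.len_p hs c.last_p

theorem econnected_arcs : EConnected c.arcs := by
  refine econnected_of_forall_reflTransGen c.hend fun x hx => ?_
  rcases c.everts_arcs ▸ hx with hx | hx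
  · exact reflTransGen_uadj_of_mem c.isChain_p_arcs hx (List.mem_of_getLast? c.last_p)
  · exact reflTransGen_uadj_of_mem c.isChain_q_arcs hx (List.mem_of_getLast? c.last_q)

theorem reflTransGen_avoid_split_or_hend (hs : c.SplitIs s) (hx : x ∈ c.nodes) (hxv : x ≠ v) :
    ReflTransGen (uadj (avoid c.arcs v)) x s ∨ ReflTransGen (uadj (avoid c.arcs v)) x c.hend := by
  rcases hx with hx | hx
  · exact reflTransGen_uadj_avoid_head_or_getLast (c.isPath_p.2.nodup_of_acyclic N.acyclic)
      c.isChain_p_arcs hs c.last_p hx hxv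
  · exact reflTransGen_uadj_avoid_head_or_getLast (c.isPath_q.2.nodup_of_acyclic N.acyclic)
      c.isChain_q_arcs (c.head?_q hs) c.last_q hx hxv

theorem reflTransGen_avoid_split_hend (hs : c.SplitIs s) (hvs : v ≠ s) (hvh : v ≠ c.hend) :
    ReflTransGen (uadj (avoid c.arcs v)) s c.hend := by
  by_cases hvp : v ∈ c.p
  · have hvq : v ∉ c.q := fun hvq => c.intDisjoint v (mem_interm hs c.last_p hvp hvs hvh)
      (mem_interm (c.head?_q hs) c.last_q hvq hvs hvh)
    exact reflTransGen_uadj_of_mem (isChain_mem_avoid c.isChain_q_arcs hvq)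
      (List.mem_of_mem_head? (c.head?_q hs)) (List.mem_of_getLast? c.last_q)
  · exact reflTransGen_uadj_of_mem (isChain_mem_avoid c.isChain_p_arcs hvp)
      (List.mem_of_mem_head? hs) (List.mem_of_getLast? c.last_p)

theorem econnected_avoid_arcs (v : V) : EConnected (avoid c.arcs v) := by
  obtain ⟨s, hs⟩ : ∃ s, c.SplitIs s := ⟨_, List.head?_eq_some_head c.isPath_p.1⟩
  have hmem : ∀ x ∈ everts (avoid c.arcs v), x ∈ c.nodes ∧ x ≠ v := fun x hx =>
    have ⟨hxA, hxv⟩ := everts_avoid_subset hx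
    ⟨c.everts_arcs ▸ hxA, hxv⟩
  by_cases hvs : v = s
  · subst hvs
    refine econnected_of_forall_reflTransGen c.hend fun x hx => ?_
    obtain ⟨hxc, hxv⟩ := hmem x hx
    exact (c.reflTransGen_avoid_split_or_hend hs hxc hxv).resolve_left
      fun h => hxv (eq_of_reflTransGen_uadj_avoid h)
  · refine econnected_of_forall_reflTransGen s fun x hx => ?_
    obtain ⟨hxc, hxv⟩ := hmem x hx
    refine (c.reflTransGen_avoid_split_or_hend hs hxc hxv).elim id fun h => ?_
    by_cases hvh : v = c.hend
    · subst hvh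
      exact absurd (eq_of_reflTransGen_uadj_avoid h) hxv
    · exact h.trans (symm (c.reflTransGen_avoid_split_hend hs hvs hvh))

theorem biconnected_arcs : N.Biconnected c.arcs :=
  ⟨fun _ => c.arc_of_mem_arcs, c.econnected_arcs, c.econnected_avoid_arcs⟩

end RetCycle

end EvoNet

theorem levelOne_split_is_tree_node {V : Type*} (N : EvoNet V)
    (hL : N.LevelOne) :
    ∀ c : EvoNet.RetCycle N, ∀ s : V, c.SplitIs s → N.IsTreeNode s := by
  intro c s hs hs_hybrid
  have hs_mem : s ∈ EvoNet.everts c.arcs := c.everts_arcs ▸ .inl (List.mem_of_mem_head? hs)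
  have hend_mem : c.hend ∈ EvoNet.everts c.arcs :=
    c.everts_arcs ▸ .inl (List.mem_of_getLast? c.last_p)
  exact c.split_ne_hend hs
    (hL c.arcs c.biconnected_arcs s c.hend hs_hybrid c.hybrid hs_mem hend_mem)
end

section
/- If an evolutionary network contains a hybrid node with three pairwise distinct parents, then it contains two reticulation cycles sharing an arc, and hence it is not a weakly galled tree. -/
/-!
For two distinct parents `u`, `w` of `h`, take paths from the root to `u` and to `w` and extend
both by the arc into `h`. While the two paths share an intermediate node, replace each by its
suffix starting there; this strictly shortens them and keeps their last arcs `(u, h)` and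
`(w, h)`, so it ends in a reticulation cycle for `h` through both arcs. Doing this for the pairs
`{a, b}` and `{a, c}` gives two cycles sharing the arc `(a, h)`, and they are distinct because
their second paths end in the different arcs `(b, h)` and `(c, h)`.
-/

namespace EvoNet

variable {α V : Type*}

lemma eq_of_pair_suffix {p : List α} {a b x y : α} (ha : [a, x] <:+ p) (hb : [b, y] <:+ p) :
    a = b := by
  have hab := (List.suffix_of_suffix_length_le ha hb le_rfl).eq_of_length rfl
  simp only [List.cons.injEq] at hab
  exact hab.1

lemma mem_zip_tail_of_pair_suffix {p : List α} {a b : α} (hp : [a, b] <:+ p) :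
    (a, b) ∈ p.zip p.tail := by
  obtain ⟨r, rfl⟩ := hp
  induction r with
  | nil => simp
  | cons c r ih =>
    obtain ⟨d, t, hdt⟩ : ∃ d t, r ++ [a, b] = d :: t := List.exists_cons_of_ne_nil (by simp)
    rw [hdt] at ih
    rw [List.cons_append, hdt]
    exact List.mem_cons_of_mem _ ih

lemma exists_suffix_head_of_mem_interm {p : List α} {x : α} (hx : x ∈ interm p) :
    ∃ s, s <:+ p ∧ s.head? = some x ∧ 2 ≤ s.length ∧ s.length < p.length := by
  obtain ⟨u, t, hut⟩ := List.append_of_mem (show x ∈ (p.drop 1).dropLast from hx)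
  have hne : p.drop 1 ≠ [] := by
    rintro hnil
    simp [hnil] at hut
  have hsuf : x :: t ++ [(p.drop 1).getLast hne] <:+ p.drop 1 :=
    ⟨u, by conv_rhs => rw [← List.dropLast_append_getLast hne, hut]
           simp⟩
  have hlen := hsuf.length_le
  have hp : p ≠ [] := by rintro rfl; simp at hne
  refine ⟨_, hsuf.trans (List.drop_suffix 1 p), rfl, by simp, ?_⟩
  simp only [List.length_drop] at hlen
  have := List.length_pos_iff.2 hp
  omega

lemma exists_suffixes_interm_disjoint (p q : List α) (hp : 2 ≤ p.length) (hq : 2 ≤ q.length)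
    (hpq : p.head? = q.head?) :
    ∃ p' q', p' <:+ p ∧ q' <:+ q ∧ 2 ≤ p'.length ∧ 2 ≤ q'.length ∧
      p'.head? = q'.head? ∧ ∀ x ∈ interm p', x ∉ interm q' := by
  by_cases hmeet : ∃ x ∈ interm p, x ∈ interm q
  swap
  · exact ⟨p, q, List.suffix_rfl, List.suffix_rfl, hp, hq, hpq,
      fun x hxp hxq => hmeet ⟨x, hxp, hxq⟩⟩
  obtain ⟨x, hxp, hxq⟩ := hmeet
  obtain ⟨s, hsp, hsx, hs, hslt⟩ := exists_suffix_head_of_mem_interm hxp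
  obtain ⟨t, htq, htx, ht, htlt⟩ := exists_suffix_head_of_mem_interm hxq
  obtain ⟨p', q', hp's, hq't, rest⟩ :=
    exists_suffixes_interm_disjoint s t hs ht (hsx.trans htx.symm)
  exact ⟨p', q', hp's.trans hsp, hq't.trans htq, rest⟩
termination_by p.length + q.length

lemma exists_isChain_head_pair_suffix {r : α → α → Prop} {x u v : α}
    (hxu : Relation.ReflTransGen r x u) (huv : r u v) :
    ∃ p : List α, p.IsChain r ∧ p.head? = some x ∧ [u, v] <:+ p := by
  induction hxu using Relation.ReflTransGen.head_induction_on with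
  | refl => exact ⟨[u, v], .cons_cons huv (.singleton v), rfl, List.suffix_rfl⟩
  | head hxy _ ih =>
    obtain ⟨p, hp, hhead, hsuf⟩ := ih
    obtain ⟨p, rfl⟩ := List.head?_eq_some_iff.1 hhead
    exact ⟨_, hp.cons_cons hxy, rfl, hsuf.trans (List.suffix_cons _ _)⟩

theorem exists_retCycle_of_arcs (N : EvoNet V) {h a b : V} (hab : a ≠ b)
    (ha : N.arc a h) (hb : N.arc b h) :
    ∃ C : RetCycle N, [a, h] <:+ C.p ∧ [b, h] <:+ C.q := by
  obtain ⟨p, hp, hp_root, hpa⟩ := exists_isChain_head_pair_suffix (N.rooted a) ha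
  obtain ⟨q, hq, hq_root, hqb⟩ := exists_isChain_head_pair_suffix (N.rooted b) hb
  obtain ⟨p', q', hp'p, hq'q, hp', hq', hhead, hdisj⟩ :=
    exists_suffixes_interm_disjoint p q hpa.length_le hqb.length_le
      (hp_root.trans hq_root.symm)
  have hp'a : [a, h] <:+ p' := List.suffix_of_suffix_length_le hpa hp'p hp'
  have hq'b : [b, h] <:+ q' := List.suffix_of_suffix_length_le hqb hq'q hq'
  refine ⟨{ hend := h, p := p', q := q'
            isPath_p := ⟨List.ne_nil_of_length_pos (by omega), hp.suffix hp'p⟩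
            isPath_q := ⟨List.ne_nil_of_length_pos (by omega), hq.suffix hq'q⟩
            len_p := hp', len_q := hq', same_origin := hhead
            last_p := by obtain ⟨r, rfl⟩ := hp'a; simp
            last_q := by obtain ⟨r, rfl⟩ := hq'b; simp
            hybrid := ⟨a, b, hab, ha, hb⟩
            intDisjoint := hdisj
            ne := fun he => hab (eq_of_pair_suffix hp'a (he ▸ hq'b)) }, hp'a, hq'b⟩

end EvoNet

theorem three_parents_not_weaklyGalled {V : Type*} (N : EvoNet V)
    (h a b c : V) (hab : a ≠ b) (hac : a ≠ c) (hbc : b ≠ c)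
    (ha : N.arc a h) (hb : N.arc b h) (hc : N.arc c h) :
    (∃ c₁ c₂ : EvoNet.RetCycle N, ¬ c₁.Equiv c₂ ∧
      ∃ e : V × V, e ∈ c₁.arcs ∧ e ∈ c₂.arcs) ∧
    ¬ N.WeaklyGalled := by
  obtain ⟨C₁, ha₁, hb₁⟩ := N.exists_retCycle_of_arcs hab ha hb
  obtain ⟨C₂, ha₂, hc₂⟩ := N.exists_retCycle_of_arcs hac ha hc
  have hne : ¬ C₁.Equiv C₂ := by
    rintro (⟨-, hq⟩ | ⟨hp, -⟩)
    · exact hbc (EvoNet.eq_of_pair_suffix hb₁ (hq ▸ hc₂))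
    · exact hac (EvoNet.eq_of_pair_suffix ha₁ (hp ▸ hc₂))
  have hshared : (a, h) ∈ C₁.arcs ∧ (a, h) ∈ C₂.arcs :=
    ⟨Or.inl (EvoNet.mem_zip_tail_of_pair_suffix ha₁),
      Or.inl (EvoNet.mem_zip_tail_of_pair_suffix ha₂)⟩
  exact ⟨⟨C₁, C₂, hne, _, hshared⟩,
    fun hW => Set.not_disjoint_iff.2 ⟨_, hshared⟩ (hW C₁ C₂ hne)⟩
end
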